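/- arXiv:2405.18972 — 2 statements merged into one kernel-verified Lean document; each statement's English description precedes it below -/
import Mathlib

section
/- Let m_1, …, m_C ∈ ℝ^d (C ≥ 2) form a simplex equiangular tight frame, let E_W, E_H > 0, and fix a class c ∈ {1,…,C}. Then over the closed ball {h ∈ ℝ^d : ‖h‖² ≤ E_H}, the function h ↦ −log( exp(√E_W·⟨m_c, h⟩) / Σ_{j=1}^C exp(√E_W·⟨m_j, h⟩) ) attains its minimum at h = √E_H · m_c. -/
open scoped RealInnerProductSpace

/-!
Writing the loss as `log (1 + ∑_{j ≠ c} exp (√E_W (⟪m j, h⟫ - ⟪m c, h⟫)))` and applying Jensen's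
inequality to `exp` over the `C - 1` classes `j ≠ c`, the ETF relation `∑ j, m j = 0` makes the mean
exponent equal to `-√E_W · C/(C-1) · ⟪m c, h⟫`. So the loss is bounded below by a decreasing
function of `⟪m c, h⟫ ≤ ‖h‖ ≤ √E_H`, and at `h = √E_H • m c` all exponents coincide, so every
inequality is an equality there.
-/

open Finset Real

variable {ι : Type*} [Fintype ι] [DecidableEq ι]

theorem Finset.cast_card_univ_erase {R : Type*} [AddGroupWithOne R] (c : ι) :
    (#(univ.erase c) : R) = Fintype.card ι - 1 := by
  rw [card_erase_of_mem (mem_univ c), card_univ, Nat.cast_pred (Fintype.card_pos_iff.2 ⟨c⟩)]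

theorem Real.neg_log_exp_div_sum_exp (z : ι → ℝ) (c : ι) :
    -log (exp (z c) / ∑ j, exp (z j)) = log (1 + ∑ j ∈ univ.erase c, exp (z j - z c)) := by
  have hsum : 1 + ∑ j ∈ univ.erase c, exp (z j - z c) = (∑ j, exp (z j)) / exp (z c) := by
    rw [← add_sum_erase univ _ (mem_univ c), add_div, div_self (exp_pos _).ne', sum_div]
    simp only [exp_sub]
  rw [hsum, ← log_inv, inv_div]

theorem Real.card_mul_exp_sum_div_card_le_sum_exp {α : Type*} (s : Finset α) (a : α → ℝ) :
    #s * exp ((∑ i ∈ s, a i) / #s) ≤ ∑ i ∈ s, exp (a i) := by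
  rcases s.eq_empty_or_nonempty with rfl | hs
  · simp
  have hcard : (0 : ℝ) < #s := by exact_mod_cast hs.card_pos
  have hjensen := convexOn_exp.map_sum_le (t := s) (w := fun _ ↦ (#s : ℝ)⁻¹) (p := a)
    (fun _ _ ↦ by positivity) (by simp [hcard.ne']) (fun _ _ ↦ Set.mem_univ _)
  simp only [smul_eq_mul, ← mul_sum] at hjensen
  rw [inv_mul_eq_div] at hjensen
  calc #s * exp ((∑ i ∈ s, a i) / #s)
      ≤ #s * ((#s : ℝ)⁻¹ * ∑ i ∈ s, exp (a i)) := by gcongr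
    _ = ∑ i ∈ s, exp (a i) := by field_simp

section ETF

variable {E : Type*} [NormedAddCommGroup E] [InnerProductSpace ℝ E] {m : ι → E}

theorem sum_erase_inner_sub_eq_of_sum_eq_zero (hsum : ∑ i, m i = 0) (c : ι) (h : E) :
    ∑ j ∈ univ.erase c, (⟪m j, h⟫ - ⟪m c, h⟫) = -(Fintype.card ι * ⟪m c, h⟫) := by
  rw [sum_sub_distrib, ← sum_inner, sum_erase_eq_sub (mem_univ c), hsum, sum_const,
    nsmul_eq_mul, cast_card_univ_erase, zero_sub, inner_neg_left]
  ring

theorem card_sub_one_mul_exp_le_sum_erase_exp (hsum : ∑ i, m i = 0) (c : ι) (t : ℝ) (h : E) :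
    (Fintype.card ι - 1) * exp (-(t * Fintype.card ι / (Fintype.card ι - 1)) * ⟪m c, h⟫) ≤
      ∑ j ∈ univ.erase c, exp (t * ⟪m j, h⟫ - t * ⟪m c, h⟫) := by
  have hmean : ∑ j ∈ univ.erase c, (t * ⟪m j, h⟫ - t * ⟪m c, h⟫) =
      -(t * Fintype.card ι) * ⟪m c, h⟫ := by
    simp only [← mul_sub, ← mul_sum, sum_erase_inner_sub_eq_of_sum_eq_zero hsum]
    ring
  have hjensen := card_mul_exp_sum_div_card_le_sum_exp (univ.erase c)
    (fun j ↦ t * ⟪m j, h⟫ - t * ⟪m c, h⟫)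
  rw [hmean, cast_card_univ_erase] at hjensen
  convert hjensen using 3
  ring

theorem sum_erase_exp_smul_self_eq (hunit : ∀ i, ‖m i‖ = 1)
    (hangle : ∀ i j, i ≠ j → ⟪m i, m j⟫ = -1 / ((Fintype.card ι : ℝ) - 1))
    (hcard : 2 ≤ Fintype.card ι) (c : ι) (t s : ℝ) :
    ∑ j ∈ univ.erase c, exp (t * ⟪m j, s • m c⟫ - t * ⟪m c, s • m c⟫) =
      (Fintype.card ι - 1) * exp (-(t * Fintype.card ι / (Fintype.card ι - 1)) * s) := by
  have hC : (1 : ℝ) < Fintype.card ι := by exact_mod_cast hcard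
  have hexp : ∀ j ∈ univ.erase c, t * ⟪m j, s • m c⟫ - t * ⟪m c, s • m c⟫ =
      -(t * Fintype.card ι / (Fintype.card ι - 1)) * s := by
    intro j hj
    rw [real_inner_smul_right, real_inner_smul_right, hangle j c (ne_of_mem_erase hj),
      real_inner_self_eq_norm_sq, hunit, one_pow]
    field_simp [(sub_pos.2 hC).ne']
    ring
  rw [sum_congr rfl fun j hj ↦ congrArg exp (hexp j hj), sum_const, nsmul_eq_mul,
    cast_card_univ_erase]

end ETF

theorem fixed_ETF_feature_minimizer_general
    (C d : ℕ) (hC : 2 ≤ C)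
    (m : Fin C → EuclideanSpace ℝ (Fin d))
    (hunit : ∀ i : Fin C, ‖m i‖ = 1)
    (hangle : ∀ i j : Fin C, i ≠ j → ⟪m i, m j⟫ = -1 / ((C : ℝ) - 1))
    (hsum : ∑ i : Fin C, m i = 0)
    (E_W E_H : ℝ) (hEH : 0 < E_H)
    (c : Fin C) :
    ‖Real.sqrt E_H • m c‖ ^ 2 ≤ E_H ∧
    ∀ h : EuclideanSpace ℝ (Fin d), ‖h‖ ^ 2 ≤ E_H →
      -Real.log (Real.exp (Real.sqrt E_W * ⟪m c, Real.sqrt E_H • m c⟫) /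
          ∑ j : Fin C, Real.exp (Real.sqrt E_W * ⟪m j, Real.sqrt E_H • m c⟫)) ≤
      -Real.log (Real.exp (Real.sqrt E_W * ⟪m c, h⟫) /
          ∑ j : Fin C, Real.exp (Real.sqrt E_W * ⟪m j, h⟫)) := by
  set t := √E_W
  set s := √E_H
  have hnorm : ‖s • m c‖ = s := by rw [norm_smul, hunit, mul_one, norm_of_nonneg (sqrt_nonneg _)]
  refine ⟨by rw [hnorm, sq_sqrt hEH.le], fun h hh ↦ ?_⟩
  have hch : ⟪m c, h⟫ ≤ s := (real_inner_le_norm _ _).trans <| by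
    rw [hunit, one_mul]; exact le_sqrt_of_sq_le hh
  have hangle' : ∀ i j, i ≠ j → ⟪m i, m j⟫ = -1 / ((Fintype.card (Fin C) : ℝ) - 1) := by
    simpa only [Fintype.card_fin] using hangle
  rw [neg_log_exp_div_sum_exp (fun j ↦ t * ⟪m j, s • m c⟫),
    neg_log_exp_div_sum_exp (fun j ↦ t * ⟪m j, h⟫)]
  refine log_le_log (by positivity) (add_le_add_right ?_ 1)
  have hlower := card_sub_one_mul_exp_le_sum_erase_exp hsum c t h
  rw [sum_erase_exp_smul_self_eq hunit hangle' (by simpa using hC)]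
  simp only [Fintype.card_fin] at hlower ⊢
  refine le_trans ?_ hlower
  have hC1 : (1 : ℝ) < C := by exact_mod_cast hC
  gcongr ?_ * exp ?_
  exact mul_le_mul_of_nonpos_left hch (neg_nonpos.2 (div_nonneg (by positivity) (by linarith)))

/-- **Fixed-ETF per-sample optimality.** If `m_1, …, m_C` form a simplex ETF, then over the
ball `‖h‖² ≤ E_H` the cross-entropy of class `c` against the scaled-ETF classifier `√E_W·M`
attains its minimum at `h = √E_H · m_c`. -/
theorem fixed_ETF_feature_minimizer
    (C d : ℕ) (hC : 2 ≤ C)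
    (m : Fin C → EuclideanSpace ℝ (Fin d))
    (hunit : ∀ i : Fin C, ‖m i‖ = 1)
    (hangle : ∀ i j : Fin C, i ≠ j → ⟪m i, m j⟫ = -1 / ((C : ℝ) - 1))
    (hsum : ∑ i : Fin C, m i = 0)
    (E_W E_H : ℝ) (hEW : 0 < E_W) (hEH : 0 < E_H)
    (c : Fin C) :
    ‖Real.sqrt E_H • m c‖ ^ 2 ≤ E_H ∧
    ∀ h : EuclideanSpace ℝ (Fin d), ‖h‖ ^ 2 ≤ E_H →
      -Real.log (Real.exp (Real.sqrt E_W * ⟪m c, Real.sqrt E_H • m c⟫) /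
          ∑ j : Fin C, Real.exp (Real.sqrt E_W * ⟪m j, Real.sqrt E_H • m c⟫)) ≤
      -Real.log (Real.exp (Real.sqrt E_W * ⟪m c, h⟫) /
          ∑ j : Fin C, Real.exp (Real.sqrt E_W * ⟪m j, h⟫)) :=
  fixed_ETF_feature_minimizer_general C d hC m hunit hangle hsum E_W E_H hEH c
end

section
/- Let F, f : ℝ^d → ℝ be differentiable, suppose ∇f is L-Lipschitz (‖∇f(u) − ∇f(v)‖ ≤ L‖u − v‖ for all u, v), and suppose F satisfies the quadratic growth condition F(w) − F(w*) ≥ (μ/2)‖w − w*‖² for all w ∈ ℝ^d at some point w* (μ > 0). Then with κ = L/μ, for every w ∈ ℝ^d: ‖∇f(w)‖² ≤ 4Lκ·(F(w) − F(w*)) + 2‖∇f(w*)‖². -/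
open scoped RealInnerProductSpace

/-!
Split `∇f(w) = (∇f(w) − ∇f(w*)) + ∇f(w*)` and use `‖a + b‖² ≤ 2‖a‖² + 2‖b‖²`. The first
term is at most `L²‖w − w*‖²` by the Lipschitz bound, and quadratic growth turns
`‖w − w*‖²` into at most `(2/μ)(F(w) − F(w*))`, giving `2L² · 2/μ = 4Lκ`.
-/

theorem sq_norm_le_two_mul_sq_norm_sub_add {E : Type*} [SeminormedAddCommGroup E] (x y : E) :
    ‖x‖ ^ 2 ≤ 2 * ‖x - y‖ ^ 2 + 2 * ‖y‖ ^ 2 :=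
  calc ‖x‖ ^ 2 ≤ (‖x - y‖ + ‖y‖) ^ 2 :=
        pow_le_pow_left₀ (norm_nonneg x) (add_comm ‖y‖ _ ▸ norm_le_norm_add_norm_sub' x y) 2
    _ ≤ 2 * (‖x - y‖ ^ 2 + ‖y‖ ^ 2) := add_sq_le
    _ = 2 * ‖x - y‖ ^ 2 + 2 * ‖y‖ ^ 2 := mul_add _ _ _

theorem corrected_gradient_norm_bound_general
    (d : ℕ) (F f : EuclideanSpace ℝ (Fin d) → ℝ)
    (L : ℝ)
    (hlip : ∀ u v : EuclideanSpace ℝ (Fin d),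
      ‖gradient f u - gradient f v‖ ≤ L * ‖u - v‖)
    (μ : ℝ) (hμ : 0 < μ)
    (wstar : EuclideanSpace ℝ (Fin d))
    (hqg : ∀ w : EuclideanSpace ℝ (Fin d),
      F w - F wstar ≥ (μ / 2) * ‖w - wstar‖ ^ 2)
    (κ : ℝ) (hκ : κ = L / μ) :
    ∀ w : EuclideanSpace ℝ (Fin d),
      ‖gradient f w‖ ^ 2 ≤ 4 * L * κ * (F w - F wstar) + 2 * ‖gradient f wstar‖ ^ 2 := by
  intro w
  have hgrad : ‖gradient f w - gradient f wstar‖ ^ 2 ≤ L ^ 2 * ‖w - wstar‖ ^ 2 := by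
    rw [← mul_pow]
    exact pow_le_pow_left₀ (norm_nonneg _) (hlip w wstar) 2
  have hdist : ‖w - wstar‖ ^ 2 ≤ 2 / μ * (F w - F wstar) := by
    rw [div_mul_eq_mul_div, le_div_iff₀ hμ]
    linarith [hqg w]
  have hscaled : L ^ 2 * ‖w - wstar‖ ^ 2 ≤ 2 * L * κ * (F w - F wstar) :=
    calc L ^ 2 * ‖w - wstar‖ ^ 2 ≤ L ^ 2 * (2 / μ * (F w - F wstar)) := by gcongr
      _ = 2 * L * κ * (F w - F wstar) := by rw [hκ]; ring
  linarith [sq_norm_le_two_mul_sq_norm_sub_add (gradient f w) (gradient f wstar)]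

/-- **Corrected bound on the (stochastic) gradient norm.** If `∇f` is L-Lipschitz and `F`
satisfies quadratic growth `F(w) − F(w*) ≥ (μ/2)‖w − w*‖²` with `μ > 0`, then with
`κ = L/μ`, `‖∇f(w)‖² ≤ 4Lκ(F(w) − F(w*)) + 2‖∇f(w*)‖²` for every `w`. -/
theorem corrected_gradient_norm_bound
    (d : ℕ) (F f : EuclideanSpace ℝ (Fin d) → ℝ)
    (hFdiff : Differentiable ℝ F) (hfdiff : Differentiable ℝ f)
    (L : ℝ)
    (hlip : ∀ u v : EuclideanSpace ℝ (Fin d),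
      ‖gradient f u - gradient f v‖ ≤ L * ‖u - v‖)
    (μ : ℝ) (hμ : 0 < μ)
    (wstar : EuclideanSpace ℝ (Fin d))
    (hqg : ∀ w : EuclideanSpace ℝ (Fin d),
      F w - F wstar ≥ (μ / 2) * ‖w - wstar‖ ^ 2)
    (κ : ℝ) (hκ : κ = L / μ) :
    ∀ w : EuclideanSpace ℝ (Fin d),
      ‖gradient f w‖ ^ 2 ≤ 4 * L * κ * (F w - F wstar) + 2 * ‖gradient f wstar‖ ^ 2 :=
  corrected_gradient_norm_bound_general d F f L hlip μ hμ wstar hqg κ hκ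
end
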